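/- Let G be a group, A an element of G, and B an element satisfying B A B^{-1} = A^{-1} and B^2 central (e.g. B^2 = -I in SU(2)). Let u, v be positive words in {a,b}* with the same letter counts (m, n), and define for each j the prefix counts A_u(j), A_v(j) of a's before the j-th b. Then w = u^{-1}v evaluates as w(A,B) = A^{(-1)^n · 2Δ_0}, where Δ_0 = Σ_{j=1}^{n} (-1)^{j-1}(A_v(j) - A_u(j)). In particular, if A = diag(e^{iθ}, e^{-iθ}) ∈ SU(2), then tr(w(A,B)) = 2cos(2Δ_0 θ), and if Δ_0 ≠ 0 then θ = π/(4|Δ_0|) yields tr(w(A,B)) = 0. -/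

import Mathlib

/-- The special unitary group `SU(2)` as a subgroup of the `2 × 2` unitary group. -/
def SU2 : Subgroup (Matrix.unitaryGroup (Fin 2) ℂ) where
  carrier := {A | (A : Matrix (Fin 2) (Fin 2) ℂ).det = 1}
  one_mem' := by simp
  mul_mem' := by
    intro A B hA hB
    simp only [Set.mem_setOf_eq] at *
    rw [Matrix.UnitaryGroup.mul_val, Matrix.det_mul, hA, hB, one_mul]
  inv_mem' := by
    intro A hA
    simp only [Set.mem_setOf_eq] at *
    rw [Matrix.UnitaryGroup.inv_val]
    simp [Matrix.det_conjTranspose, star, hA]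
    rfl

/-- The underlying `2 × 2` complex matrix of an element of `SU(2)`. -/
def SU2.mat (A : SU2) : Matrix (Fin 2) (Fin 2) ℂ := A.val.val

/-- Positive words: `true` is the letter `a`, `false` is the letter `b`. -/
abbrev PosWord := List Bool

/-- Evaluation of a positive word, substituting `A` for `a` and `B` for `b`. -/
def evalPos {G : Type*} [Group G] (A B : G) (x : PosWord) : G :=
  (x.map (fun c => if c then A else B)).prod

/-- `prefixCountA x j` is `A_x(j)`: the number of `a`'s before the `j`-th `b` in `x`. -/
def prefixCountA : PosWord → ℕ → ℕ
  | [], _ => 0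
  | (true :: xs), j => if j = 0 then 0 else 1 + prefixCountA xs j
  | (false :: xs), j => if j ≤ 1 then 0 else prefixCountA xs (j - 1)

/-- The alternating row-prefix invariant `Δ₀ = Σ_{j=1}^n (-1)^{j-1}(A_v(j) - A_u(j))`. -/
def delta0 (u v : PosWord) : ℤ :=
  ∑ j ∈ Finset.range (u.count false),
    (-1 : ℤ) ^ j * ((prefixCountA v (j + 1) : ℤ) - (prefixCountA u (j + 1) : ℤ))

/-
Since `B` conjugates `A` to `A⁻¹`, every `B` can be pushed to the right of a positive word at
the cost of inverting the powers of `A` it passes, so `x(A, B) = A ^ ν(x) * B ^ n` with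
`ν(x) = Σ (-1)^t x_t`. Hence `u(A, B)⁻¹ v(A, B) = B⁻ⁿ A^(ν(v) - ν(u)) Bⁿ`, which is
`A^((-1)ⁿ (ν(v) - ν(u)))`, and an Abel summation `ν(x) = 2 Σ_j (-1)^(j-1) A_x(j) + (-1)ⁿ m`
gives `ν(v) - ν(u) = 2 Δ₀`. In `SU(2)` the powers of `A = diag(e^{iθ}, e^{-iθ})` are
`diag(e^{ikθ}, e^{-ikθ})` with trace `2 cos(kθ)`; `θ = π/(4|Δ₀|)` gives `2Δ₀θ = ±π/2`.
-/

/-- `ν(x)`: each `a` counts with sign `(-1)^t`, where `t` is the number of `b`'s before it. -/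
def signedCountA : PosWord → ℤ
  | [] => 0
  | true :: xs => 1 + signedCountA xs
  | false :: xs => -signedCountA xs

def altPrefixCountSum (x : PosWord) : ℤ :=
  ∑ j ∈ Finset.range (x.count false), (-1 : ℤ) ^ j * (prefixCountA x (j + 1) : ℤ)

lemma two_mul_sum_neg_one_pow_add_neg_one_pow (n : ℕ) :
    2 * ∑ j ∈ Finset.range n, (-1 : ℤ) ^ j + (-1) ^ n = 1 := by
  induction n with
  | zero => simp
  | succ n ih => rw [Finset.sum_range_succ, pow_succ]; linarith

lemma altPrefixCountSum_cons_true (xs : PosWord) :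
    altPrefixCountSum (true :: xs)
      = altPrefixCountSum xs + ∑ j ∈ Finset.range (xs.count false), (-1 : ℤ) ^ j := by
  simp only [altPrefixCountSum, List.count_cons_of_ne Bool.false_ne_true.symm,
    ← Finset.sum_add_distrib]
  refine Finset.sum_congr rfl fun j _ => ?_
  rw [prefixCountA, if_neg j.succ_ne_zero, Nat.cast_add, Nat.cast_one]
  ring

lemma altPrefixCountSum_cons_false (xs : PosWord) :
    altPrefixCountSum (false :: xs) = -altPrefixCountSum xs := by
  rw [altPrefixCountSum, altPrefixCountSum, List.count_cons_self, Finset.sum_range_succ',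
    ← Finset.sum_neg_distrib]
  simp [prefixCountA, pow_succ]

lemma signedCountA_eq (x : PosWord) :
    signedCountA x = 2 * altPrefixCountSum x + (-1) ^ x.count false * (x.count true : ℤ) := by
  induction x with
  | nil => simp [signedCountA, altPrefixCountSum]
  | cons c xs ih =>
    cases c with
    | true =>
      have hgeom := two_mul_sum_neg_one_pow_add_neg_one_pow (xs.count false)
      simp only [signedCountA, altPrefixCountSum_cons_true, List.count_cons_self,
        List.count_cons_of_ne Bool.false_ne_true.symm, ih]
      push_cast
      linear_combination -hgeom
    | false =>
      simp only [signedCountA, altPrefixCountSum_cons_false, List.count_cons_self,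
        List.count_cons_of_ne Bool.false_ne_true, ih, pow_succ]
      ring

lemma signedCountA_sub_eq_two_mul_delta0 {u v : PosWord}
    (ha : u.count true = v.count true) (hb : u.count false = v.count false) :
    signedCountA v - signedCountA u = 2 * delta0 u v := by
  simp only [signedCountA_eq, altPrefixCountSum, delta0, mul_sub, Finset.sum_sub_distrib, ha, hb]
  ring

section Dihedral

variable {G : Type*} [Group G] {A B : G}

lemma mul_zpow_of_conj_eq_inv (h : B * A * B⁻¹ = A⁻¹) (k : ℤ) :
    B * A ^ k = A ^ (-k) * B := by
  have hBA : SemiconjBy B A A⁻¹ := mul_inv_eq_iff_eq_mul.mp h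
  rw [(hBA.zpow_right k).eq, inv_zpow']

lemma pow_mul_zpow_of_conj_eq_inv (h : B * A * B⁻¹ = A⁻¹) (n : ℕ) (k : ℤ) :
    B ^ n * A ^ k = A ^ ((-1) ^ n * k) * B ^ n := by
  induction n generalizing k with
  | zero => simp
  | succ n ih =>
    rw [pow_succ, mul_assoc, mul_zpow_of_conj_eq_inv h, ← mul_assoc, ih, mul_assoc, pow_succ]
    ring_nf

lemma evalPos_eq_zpow_mul_pow (h : B * A * B⁻¹ = A⁻¹) (x : PosWord) :
    evalPos A B x = A ^ signedCountA x * B ^ x.count false := by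
  induction x with
  | nil => simp [evalPos, signedCountA]
  | cons c xs ih =>
    cases c with
    | true =>
      have hcons : evalPos A B (true :: xs) = A * evalPos A B xs := by simp [evalPos]
      rw [hcons, ih, signedCountA, List.count_cons_of_ne Bool.false_ne_true.symm,
        ← mul_assoc, zpow_one_add]
    | false =>
      have hcons : evalPos A B (false :: xs) = B * evalPos A B xs := by simp [evalPos]
      rw [hcons, ih, signedCountA, List.count_cons_self, ← mul_assoc,
        mul_zpow_of_conj_eq_inv h, mul_assoc, pow_succ']

lemma evalPos_inv_mul_evalPos (h : B * A * B⁻¹ = A⁻¹) {u v : PosWord}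
    (hb : u.count false = v.count false) :
    (evalPos A B u)⁻¹ * evalPos A B v
      = A ^ ((-1) ^ u.count false * (signedCountA v - signedCountA u)) := by
  rw [inv_mul_eq_iff_eq_mul, evalPos_eq_zpow_mul_pow h, evalPos_eq_zpow_mul_pow h, ← hb,
    mul_assoc, pow_mul_zpow_of_conj_eq_inv h, ← mul_assoc, ← zpow_add, ← mul_assoc,
    ← pow_add, ← two_mul, pow_mul, neg_one_sq, one_pow, one_mul, add_sub_cancel]

lemma evalPos_inv_mul_evalPos_eq_zpow_delta0 (h : B * A * B⁻¹ = A⁻¹) {u v : PosWord}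
    (ha : u.count true = v.count true) (hb : u.count false = v.count false) :
    (evalPos A B u)⁻¹ * evalPos A B v = A ^ ((-1) ^ u.count false * (2 * delta0 u v)) := by
  rw [evalPos_inv_mul_evalPos h hb, signedCountA_sub_eq_two_mul_delta0 ha hb]

end Dihedral

noncomputable def expDiag (θ : ℝ) : Matrix (Fin 2) (Fin 2) ℂ :=
  Matrix.diagonal ![Complex.exp (θ * Complex.I), Complex.exp (-θ * Complex.I)]

lemma expDiag_zero : expDiag 0 = 1 := by
  rw [expDiag, ← Matrix.diagonal_one]
  congr 1
  funext i
  fin_cases i <;> simp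

lemma expDiag_mul (s t : ℝ) : expDiag s * expDiag t = expDiag (s + t) := by
  rw [expDiag, expDiag, expDiag, Matrix.diagonal_mul_diagonal]
  congr 1
  funext i
  fin_cases i <;> simp [← Complex.exp_add] <;> ring_nf

lemma star_expDiag (θ : ℝ) : star (expDiag θ) = expDiag (-θ) := by
  rw [Matrix.star_eq_conjTranspose, expDiag, expDiag, Matrix.diagonal_conjTranspose]
  congr 1
  funext i
  fin_cases i <;> simp [← Complex.exp_conj]

lemma trace_expDiag (θ : ℝ) : (expDiag θ).trace = 2 * Real.cos θ := by
  rw [expDiag, Matrix.trace_diagonal, Fin.sum_univ_two, Complex.ofReal_cos, Complex.two_cos]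
  rfl

lemma SU2.mat_one : SU2.mat 1 = 1 := rfl

lemma SU2.mat_mul (x y : SU2) : SU2.mat (x * y) = SU2.mat x * SU2.mat y := rfl

lemma SU2.mat_inv (x : SU2) : SU2.mat x⁻¹ = star (SU2.mat x) := rfl

lemma SU2.mat_zpow_of_mat_eq_expDiag {A : SU2} {θ : ℝ} (hA : SU2.mat A = expDiag θ) (k : ℤ) :
    SU2.mat (A ^ k) = expDiag (k * θ) := by
  induction k using Int.induction_on with
  | zero => rw [zpow_zero, Int.cast_zero, zero_mul, expDiag_zero, SU2.mat_one]
  | succ n ih =>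
    rw [zpow_add_one, SU2.mat_mul, ih, hA, expDiag_mul]
    congr 1
    push_cast
    ring
  | pred n ih =>
    rw [zpow_sub_one, SU2.mat_mul, ih, SU2.mat_inv, hA, star_expDiag, expDiag_mul]
    congr 1
    push_cast
    ring

lemma cos_neg_one_pow_mul (n : ℕ) (x : ℝ) : Real.cos ((-1) ^ n * x) = Real.cos x := by
  rcases neg_one_pow_eq_or ℝ n with h | h <;> simp [h]

lemma cos_two_mul_mul_pi_div_four_abs {d : ℤ} (hd : d ≠ 0) :
    Real.cos (2 * d * (Real.pi / (4 * |d|))) = 0 := by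
  rw [← Real.cos_abs, Int.cast_abs, abs_mul, abs_mul, abs_div, abs_two, abs_of_pos Real.pi_pos,
    abs_mul, abs_abs, abs_of_pos (by norm_num : (0 : ℝ) < 4)]
  convert Real.cos_pi_div_two using 2
  field_simp
  ring

/-- if `B A B⁻¹ = A⁻¹` and `B²` is central, then for positive words
`u, v` with equal letter counts, `w = u⁻¹v` evaluates as `A^{(-1)^n · 2Δ₀}`; and in
`SU(2)` with `A = diag(e^{iθ}, e^{-iθ})` one gets `tr(w(A,B)) = 2cos(2Δ₀θ)`, which
vanishes for `θ = π/(4|Δ₀|)` whenever `Δ₀ ≠ 0`. -/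
theorem dihedral_point_trace (u v : PosWord)
    (ha : u.count true = v.count true) (hb : u.count false = v.count false) :
    (∀ (G : Type*) (_ : Group G) (A B : G), B * A * B⁻¹ = A⁻¹ →
      (∀ g : G, B ^ 2 * g = g * B ^ 2) →
      (evalPos A B u)⁻¹ * evalPos A B v
        = A ^ ((-1 : ℤ) ^ (u.count false) * (2 * delta0 u v))) ∧
    (∀ (A B : SU2) (θ : ℝ), B * A * B⁻¹ = A⁻¹ →
      (∀ g : SU2, B ^ 2 * g = g * B ^ 2) →
      SU2.mat A
        = Matrix.diagonal ![Complex.exp (θ * Complex.I), Complex.exp (-θ * Complex.I)] →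
      Matrix.trace (SU2.mat ((evalPos A B u)⁻¹ * evalPos A B v))
          = 2 * Real.cos (2 * (delta0 u v : ℝ) * θ) ∧
        (delta0 u v ≠ 0 → θ = Real.pi / (4 * |(delta0 u v : ℤ)|) →
          Matrix.trace (SU2.mat ((evalPos A B u)⁻¹ * evalPos A B v)) = 0)) := by
  refine ⟨fun G _ A B h _ => evalPos_inv_mul_evalPos_eq_zpow_delta0 h ha hb,
    fun A B θ h _ hA => ?_⟩
  have htr : Matrix.trace (SU2.mat ((evalPos A B u)⁻¹ * evalPos A B v))
      = 2 * Real.cos (2 * (delta0 u v : ℝ) * θ) := by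
    rw [evalPos_inv_mul_evalPos_eq_zpow_delta0 h ha hb, SU2.mat_zpow_of_mat_eq_expDiag hA,
      trace_expDiag]
    congr 2
    push_cast
    rw [mul_assoc, cos_neg_one_pow_mul]
  refine ⟨htr, fun hd hθ => ?_⟩
  rw [htr, hθ, cos_two_mul_mul_pi_div_four_abs hd, Complex.ofReal_zero, mul_zero]
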